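/- arXiv:2205.01383 — 7 statements merged into one kernel-verified Lean document; each statement's English description precedes it below -/
import Mathlib

section
/- For every natural number n, the number of Łukasiewicz paths of length n equals the n-th Catalan number catalan n = C(2n, n)/(n+1). -/
/-!
Replacing each step `k ≥ -1` by `k + 1` up-steps followed by one down-step turns a Łukasiewicz
path of length `n` into a Dyck path of semilength `n`: after each down-step the Dyck path is at
the height reached by the Łukasiewicz path, and in between it only climbs, so one path stays
nonnegative iff the other does. Reading off the run of up-steps before each down-step inverts the
encoding, and Dyck paths of semilength `n` are counted by `catalan n`.
-/

/-- A Łukasiewicz path of length `n`: a list of `n` integer steps, each `≥ -1`,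
with all partial sums `≥ 0` and total sum `0`. -/
def IsLukasiewicz (w : List ℤ) (n : ℕ) : Prop :=
  w.length = n ∧ (∀ x ∈ w, -1 ≤ x) ∧ (∀ i, 0 ≤ (w.take i).sum) ∧ w.sum = 0

open List DyckStep

def StaysNonnegFrom (h : ℤ) (w : List ℤ) : Prop :=
  ∀ i, 0 ≤ h + (w.take i).sum

lemma StaysNonnegFrom.nonneg {h : ℤ} {w : List ℤ} (hw : StaysNonnegFrom h w) : 0 ≤ h := by
  simpa using hw 0

lemma staysNonnegFrom_cons {h x : ℤ} {w : List ℤ} :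
    StaysNonnegFrom h (x :: w) ↔ 0 ≤ h ∧ StaysNonnegFrom (h + x) w := by
  refine ⟨fun hw => ⟨hw.nonneg, fun i => ?_⟩, fun ⟨h0, hw⟩ i => ?_⟩
  · simpa [add_assoc] using hw (i + 1)
  · cases i with
    | zero => simpa using h0
    | succ i => simpa [add_assoc] using hw i

lemma staysNonnegFrom_replicate_one_append {h : ℤ} {m : ℕ} {w : List ℤ} :
    StaysNonnegFrom h (replicate m 1 ++ w) ↔ 0 ≤ h ∧ StaysNonnegFrom (h + m) w := by
  induction m generalizing h with
  | zero => simpa using fun hw => hw.nonneg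
  | succ m ih =>
    have hm : h + 1 + m = h + (m + 1 : ℕ) := by push_cast; ring
    rw [replicate_succ, cons_append, staysNonnegFrom_cons, ih, hm]
    exact ⟨fun ⟨h0, _, hw⟩ => ⟨h0, hw⟩, fun ⟨h0, hw⟩ => ⟨h0, by omega, hw⟩⟩

def DyckStep.rise : DyckStep → ℤ
  | U => 1
  | D => -1

lemma sum_map_rise (l : List DyckStep) : (l.map rise).sum = l.count U - l.count D := by
  induction l with
  | nil => simp
  | cons s l ih => cases s <;> simp [rise, ih] <;> ring

lemma forall_count_take_le_iff_staysNonnegFrom (l : List DyckStep) :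
    (∀ i, (l.take i).count D ≤ (l.take i).count U) ↔ StaysNonnegFrom 0 (l.map rise) := by
  refine forall_congr' fun i => ?_
  rw [← map_take, sum_map_rise]
  omega

def lukToDyck (w : List ℤ) : List DyckStep :=
  w.flatMap fun k => replicate (k + 1).toNat U ++ [D]

@[simp] lemma lukToDyck_cons (k : ℤ) (w : List ℤ) :
    lukToDyck (k :: w) = replicate (k + 1).toNat U ++ D :: lukToDyck w := by
  simp [lukToDyck]

lemma count_D_lukToDyck (w : List ℤ) : (lukToDyck w).count D = w.length := by
  induction w with
  | nil => rfl
  | cons k w ih => simp [count_replicate, ih]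

lemma map_rise_lukToDyck_cons (k : ℤ) (w : List ℤ) :
    (lukToDyck (k :: w)).map rise =
      replicate (k + 1).toNat 1 ++ -1 :: (lukToDyck w).map rise := by
  simp [rise]

lemma sum_map_rise_lukToDyck {w : List ℤ} (hw : ∀ x ∈ w, -1 ≤ x) :
    ((lukToDyck w).map rise).sum = w.sum := by
  induction w with
  | nil => rfl
  | cons k w ih =>
    rw [forall_mem_cons] at hw
    rw [map_rise_lukToDyck_cons, sum_append, sum_cons, ih hw.2, sum_replicate, sum_cons,
      nsmul_eq_mul, mul_one, Int.toNat_of_nonneg (by omega)]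
    ring

lemma staysNonnegFrom_map_rise_lukToDyck_iff {w : List ℤ} (hw : ∀ x ∈ w, -1 ≤ x) {h : ℤ} :
    StaysNonnegFrom h ((lukToDyck w).map rise) ↔ StaysNonnegFrom h w := by
  induction w generalizing h with
  | nil => rfl
  | cons k w ih =>
    rw [forall_mem_cons] at hw
    have hk : h + ((k + 1).toNat : ℤ) + -1 = h + k := by rw [Int.toNat_of_nonneg (by omega)]; ring
    rw [map_rise_lukToDyck_cons, staysNonnegFrom_replicate_one_append, staysNonnegFrom_cons,
      staysNonnegFrom_cons, hk, ih hw.2]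
    exact ⟨fun ⟨h0, _, hw⟩ => ⟨h0, hw⟩, fun ⟨h0, hw'⟩ => ⟨h0, by have := hw'.nonneg; omega, hw'⟩⟩

lemma count_U_eq_count_D_lukToDyck_iff {w : List ℤ} (hw : ∀ x ∈ w, -1 ≤ x) :
    (lukToDyck w).count U = (lukToDyck w).count D ↔ w.sum = 0 := by
  rw [← sum_map_rise_lukToDyck hw, sum_map_rise]
  omega

lemma forall_count_take_lukToDyck_le_iff {w : List ℤ} (hw : ∀ x ∈ w, -1 ≤ x) :
    (∀ i, ((lukToDyck w).take i).count D ≤ ((lukToDyck w).take i).count U) ↔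
      ∀ i, 0 ≤ (w.take i).sum := by
  rw [forall_count_take_le_iff_staysNonnegFrom, staysNonnegFrom_map_rise_lukToDyck_iff hw]
  simp only [StaysNonnegFrom, zero_add]

/-- `ups` counts the up-steps read since the last down-step. -/
def dyckToLuk : ℕ → List DyckStep → List ℤ
  | _, [] => []
  | ups, U :: l => dyckToLuk (ups + 1) l
  | ups, D :: l => ((ups : ℤ) - 1) :: dyckToLuk 0 l

lemma neg_one_le_of_mem_dyckToLuk {ups : ℕ} {l : List DyckStep} {x : ℤ}
    (hx : x ∈ dyckToLuk ups l) : -1 ≤ x := by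
  induction l generalizing ups with
  | nil => simp [dyckToLuk] at hx
  | cons s l ih =>
    cases s with
    | U => exact ih hx
    | D =>
      rcases mem_cons.1 hx with rfl | hx
      · omega
      · exact ih hx

lemma dyckToLuk_replicate_append (m ups : ℕ) (l : List DyckStep) :
    dyckToLuk ups (replicate m U ++ l) = dyckToLuk (ups + m) l := by
  induction m generalizing ups with
  | zero => rfl
  | succ m ih => rw [replicate_succ, cons_append, dyckToLuk, ih, add_right_comm]; rfl

lemma dyckToLuk_lukToDyck {w : List ℤ} (hw : ∀ x ∈ w, -1 ≤ x) :
    dyckToLuk 0 (lukToDyck w) = w := by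
  induction w with
  | nil => rfl
  | cons k w ih =>
    rw [forall_mem_cons] at hw
    rw [lukToDyck_cons, dyckToLuk_replicate_append, dyckToLuk, ih hw.2]
    congr
    omega

lemma lukToDyck_dyckToLuk (ups : ℕ) {l : List DyckStep} (hl : l.getLast? = some D) :
    lukToDyck (dyckToLuk ups l) = replicate ups U ++ l := by
  induction l generalizing ups with
  | nil => simp at hl
  | cons s l ih =>
    cases l with
    | nil =>
      obtain rfl : s = D := by simpa using hl
      simp [dyckToLuk, lukToDyck]
    | cons t l =>
      rw [getLast?_cons_cons] at hl
      cases s with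
      | U => rw [dyckToLuk, ih _ hl, replicate_succ']; simp
      | D => rw [dyckToLuk, lukToDyck_cons, ih _ hl]; simp

lemma lukToDyck_dyckToLuk_toList (p : DyckWord) :
    lukToDyck (dyckToLuk 0 p.toList) = p.toList := by
  rcases eq_or_ne p 0 with rfl | hp
  · rfl
  · have hne : p.toList ≠ [] := DyckWord.toList_ne_nil.2 hp
    simpa using lukToDyck_dyckToLuk 0 (by rw [getLast?_eq_some_getLast hne, p.getLast_eq_D hne])

def IsLukasiewicz.toDyckWord {w : List ℤ} {n : ℕ} (hw : IsLukasiewicz w n) : DyckWord where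
  toList := lukToDyck w
  count_U_eq_count_D := (count_U_eq_count_D_lukToDyck_iff hw.2.1).2 hw.2.2.2
  count_D_le_count_U := (forall_count_take_lukToDyck_le_iff hw.2.1).2 hw.2.2.1

lemma IsLukasiewicz.semilength_toDyckWord {w : List ℤ} {n : ℕ} (hw : IsLukasiewicz w n) :
    hw.toDyckWord.semilength = n := by
  rw [DyckWord.semilength_eq_count_D]
  exact (count_D_lukToDyck w).trans hw.1

lemma isLukasiewicz_dyckToLuk {p : DyckWord} {n : ℕ} (hn : p.semilength = n) :
    IsLukasiewicz (dyckToLuk 0 p.toList) n := by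
  have hw : ∀ x ∈ dyckToLuk 0 p.toList, -1 ≤ x := fun _ => neg_one_le_of_mem_dyckToLuk
  have hp := lukToDyck_dyckToLuk_toList p
  refine ⟨?_, hw, (forall_count_take_lukToDyck_le_iff hw).1 ?_,
    (count_U_eq_count_D_lukToDyck_iff hw).1 ?_⟩
  · rw [← hn, DyckWord.semilength_eq_count_D, ← count_D_lukToDyck, hp]
  · rw [hp]; exact p.count_D_le_count_U
  · rw [hp]; exact p.count_U_eq_count_D

def lukasiewiczEquivDyckWord (n : ℕ) :
    {w : List ℤ // IsLukasiewicz w n} ≃ {p : DyckWord // p.semilength = n} where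
  toFun w := ⟨w.2.toDyckWord, w.2.semilength_toDyckWord⟩
  invFun p := ⟨dyckToLuk 0 p.1.toList, isLukasiewicz_dyckToLuk p.2⟩
  left_inv w := Subtype.ext (dyckToLuk_lukToDyck w.2.2.1)
  right_inv p := Subtype.ext (DyckWord.ext (lukToDyck_dyckToLuk_toList p.1))

theorem lukasiewicz_count_eq_catalan (n : ℕ) :
    Nat.card {w : List ℤ // IsLukasiewicz w n} = catalan n := by
  rw [Nat.card_congr (lukasiewiczEquivDyckWord n), Nat.card_eq_fintype_card,
    DyckWord.card_dyckWord_semilength_eq_catalan]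
end

section
/- For all n ≥ 1 and k ≥ 0, the number a(n,k) of partial Łukasiewicz paths of length n ending at height k satisfies (n+k+1) · a(n,k) = (k+2) · C(2n+k−1, n−1); equivalently a(n,k) = ((k+2)/(n+k+1)) · C(2n+k−1, n−1). -/
/-!
Deleting the last step of a path of length `n + 1` ending at height `k` leaves a path of length
`n` ending at some height `m ≤ k + 1`, and every such path extends uniquely, so
`a(n+1, k) = ∑_{m ≤ k+1} a(n, m)`. The ballot numbers `B(n, j) = j / (2n + j) · C(2n + j, n)`
obey `B(n+1, j) + B(n, j+2) = B(n+1, j+1)`, i.e. `∑_{m < j} B(n, m+2) = B(n+1, j)`: the same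
recursion. Induction on `n` gives `a(n+1, k) = B(n, k+2)`, which is the claimed formula.
-/

/-- A partial Łukasiewicz path of length `n` ending at height `k`:
a list of `n` integer steps, each `≥ -1`, with all partial sums `≥ 0`
and total sum `k`. -/
def IsPartialLuk (w : List ℤ) (n k : ℕ) : Prop :=
  w.length = n ∧ (∀ x ∈ w, -1 ≤ x) ∧ (∀ i, 0 ≤ (w.take i).sum) ∧ w.sum = k

open Finset

namespace IsPartialLuk

variable {v w : List ℤ} {x : ℤ} {n k m : ℕ}

theorem zero_iff : IsPartialLuk w 0 k ↔ w = [] ∧ k = 0 := by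
  constructor
  · rintro ⟨hlen, -, -, hsum⟩
    obtain rfl := List.length_eq_zero_iff.mp hlen
    exact ⟨rfl, by simpa [eq_comm] using hsum⟩
  · rintro ⟨rfl, rfl⟩
    simp [IsPartialLuk]

theorem append_singleton (hv : IsPartialLuk v n m) (hm : m ≤ k + 1) :
    IsPartialLuk (v ++ [(k : ℤ) - m]) (n + 1) k := by
  obtain ⟨hlen, hmem, hpart, hsum⟩ := hv
  refine ⟨by simp [hlen], ?_, fun i => ?_, by simp [hsum]⟩
  · simp only [List.mem_append, List.mem_singleton]
    rintro y (hy | rfl)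
    · exact hmem y hy
    · omega
  · rcases le_or_gt i v.length with hi | hi
    · rw [List.take_append_of_le_length hi]
      exact hpart i
    · rw [List.take_of_length_le (by simp; omega)]
      simp [hsum]

theorem of_append_singleton (h : IsPartialLuk (v ++ [x]) (n + 1) k) :
    IsPartialLuk v n v.sum.toNat ∧ v.sum.toNat ≤ k + 1 ∧ x = k - v.sum.toNat := by
  obtain ⟨hlen, hmem, hpart, hsum⟩ := h
  have hsum_nonneg : 0 ≤ v.sum := by
    simpa using hpart v.length
  have hx : -1 ≤ x := hmem x (by simp)
  simp only [List.sum_append, List.sum_singleton] at hsum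
  refine ⟨⟨by simpa using hlen, fun y hy => hmem y (by simp [hy]), fun i => ?_, by omega⟩,
    by omega, by omega⟩
  rcases le_or_gt i v.length with hi | hi
  · simpa [List.take_append_of_le_length hi] using hpart i
  · rwa [List.take_of_length_le hi.le]

theorem sum_eq (h : IsPartialLuk w n k) : w.sum = k := h.2.2.2

end IsPartialLuk

def appendLast (n k : ℕ) :
    (Σ m : Fin (k + 2), {v : List ℤ // IsPartialLuk v n m}) →
      {w : List ℤ // IsPartialLuk w (n + 1) k} :=
  fun ⟨m, v⟩ => ⟨v.1 ++ [(k : ℤ) - m], v.2.append_singleton (Nat.lt_succ_iff.mp m.2)⟩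

theorem appendLast_bijective (n k : ℕ) : Function.Bijective (appendLast n k) := by
  constructor
  · rintro ⟨m, v, hv⟩ ⟨m', v', hv'⟩ h
    obtain ⟨rfl, -⟩ := List.append_inj' (Subtype.ext_iff.mp h) rfl
    have hm : m = m' := Fin.ext (by exact_mod_cast hv.sum_eq.symm.trans hv'.sum_eq)
    subst hm
    rfl
  · rintro ⟨w, hw⟩
    obtain ⟨v, x, rfl⟩ := (List.eq_nil_or_concat' w).resolve_left fun h => by
      simpa [h] using hw.1
    obtain ⟨hv, hm, rfl⟩ := hw.of_append_singleton
    exact ⟨⟨⟨v.sum.toNat, Nat.lt_succ_of_le hm⟩, v, hv⟩, rfl⟩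

instance finite_partialLuk (n k : ℕ) : Finite {w : List ℤ // IsPartialLuk w n k} := by
  induction n generalizing k with
  | zero =>
    have : Subsingleton {w : List ℤ // IsPartialLuk w 0 k} :=
      ⟨fun ⟨v, hv⟩ ⟨w, hw⟩ => Subtype.ext ((IsPartialLuk.zero_iff.mp hv).1.trans
        (IsPartialLuk.zero_iff.mp hw).1.symm)⟩
    infer_instance
  | succ n ih => exact Finite.of_surjective _ (appendLast_bijective n k).2

noncomputable def partialLukCount (n k : ℕ) : ℕ := Nat.card {w : List ℤ // IsPartialLuk w n k}

theorem partialLukCount_zero (k : ℕ) : partialLukCount 0 k = if k = 0 then 1 else 0 := by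
  simp only [partialLukCount, IsPartialLuk.zero_iff]
  split_ifs with hk <;> simp [hk]

theorem partialLukCount_succ (n k : ℕ) :
    partialLukCount (n + 1) k = ∑ m ∈ range (k + 2), partialLukCount n m := by
  rw [partialLukCount, ← Nat.card_eq_of_bijective _ (appendLast_bijective n k), Nat.card_sigma,
    ← Fin.sum_univ_eq_sum_range]
  rfl

noncomputable def ballot (n j : ℕ) : ℚ := j / (2 * n + j) * (2 * n + j).choose n

theorem ballot_succ_add (n j : ℕ) :
    ballot (n + 1) j + ballot n (j + 2) = ballot (n + 1) (j + 1) := by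
  set N := 2 * n + j + 2
  have h₁ : ((N.choose (n + 1) : ℕ) : ℚ) = N.choose n * (n + j + 2) / (n + 1) := by
    rw [eq_div_iff (by positivity)]
    have := Nat.choose_succ_right_eq N n
    rw [show N - n = n + j + 2 by omega] at this
    exact_mod_cast this
  have h₂ : (((N + 1).choose (n + 1) : ℕ) : ℚ) = (N + 1) * N.choose n / (n + 1) := by
    rw [eq_div_iff (by positivity)]
    exact_mod_cast (Nat.add_one_mul_choose_eq N n).symm
  simp only [ballot, show 2 * (n + 1) + j = N by ring, show 2 * (n + 1) + (j + 1) = N + 1 by ring,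
    show 2 * n + (j + 2) = N by ring, h₁, h₂]
  simp only [N]
  push_cast
  field_simp
  ring

theorem sum_range_ballot (n j : ℕ) : ∑ m ∈ range j, ballot n (m + 2) = ballot (n + 1) j := by
  induction j with
  | zero => simp [ballot]
  | succ j ih => rw [sum_range_succ, ih, ballot_succ_add]

theorem partialLukCount_succ_eq_ballot (n k : ℕ) :
    (partialLukCount (n + 1) k : ℚ) = ballot n (k + 2) := by
  induction n generalizing k with
  | zero =>
    simp only [partialLukCount_succ, partialLukCount_zero, sum_ite_eq', mem_range]
    simp [ballot]
    field_simp
  | succ n ih =>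
    rw [partialLukCount_succ, Nat.cast_sum]
    simp only [ih, sum_range_ballot]

theorem partialLuk_count (n k : ℕ) (hn : 1 ≤ n) :
    (n + k + 1) * Nat.card {w : List ℤ // IsPartialLuk w n k} =
      (k + 2) * Nat.choose (2 * n + k - 1) (n - 1) := by
  obtain ⟨n, rfl⟩ := Nat.exists_eq_add_of_le' hn
  set N := 2 * n + k + 1
  have hchoose : (((N + 1).choose n : ℕ) : ℚ) = N.choose n * (N + 1) / (n + k + 2) := by
    rw [eq_div_iff (by positivity)]
    have := Nat.choose_mul_succ_eq N n
    rw [show N + 1 - n = n + k + 2 by omega] at this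
    exact_mod_cast this.symm
  rw [show 2 * (n + 1) + k - 1 = N by omega, Nat.add_sub_cancel]
  qify
  rw [← partialLukCount, partialLukCount_succ_eq_ballot, ballot,
    show 2 * n + (k + 2) = N + 1 by omega, hchoose]
  simp only [N]
  push_cast
  field_simp
  ring
end

section
/- For all n ≥ 2 and k ≥ 0, the number g(n,k) of partial Łukasiewicz paths of length n ending at height k whose last step is a down-step satisfies (n+k+1) · g(n,k) = (k+3) · C(2n+k−2, n−2). -/
/-- The last step of the path is a down-step, i.e. `w_n = -1`. -/
def LastStepDown (w : List ℤ) : Prop := w.getLast? = some (-1)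

namespace IsPartialLuk

variable {w : List ℤ} {m i j : ℕ} {a : ℤ}

theorem ne_nil (h : IsPartialLuk w (m + 1) j) : w ≠ [] :=
  List.ne_nil_of_length_pos (by rw [h.1]; omega)

theorem dropLast_sum_nonneg (h : IsPartialLuk w (m + 1) j) : 0 ≤ w.dropLast.sum := by
  simpa [List.dropLast_eq_take, h.1] using h.2.2.1 m

theorem dropLast_sum_add_getLast (h : IsPartialLuk w (m + 1) j) :
    w.dropLast.sum + w.getLast h.ne_nil = j := by
  rw [← h.2.2.2, ← List.sum_concat, List.concat_eq_append, List.dropLast_concat_getLast]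

theorem neg_one_le_getLast (h : IsPartialLuk w (m + 1) j) : -1 ≤ w.getLast h.ne_nil :=
  h.2.1 _ (List.getLast_mem _)

theorem dropLast (h : IsPartialLuk w (m + 1) j) :
    IsPartialLuk w.dropLast m w.dropLast.sum.toNat := by
  refine ⟨by simp [h.1], fun x hx => h.2.1 x (List.dropLast_subset w hx), fun i => ?_,
    (Int.toNat_of_nonneg h.dropLast_sum_nonneg).symm⟩
  rw [List.dropLast_eq_take, List.take_take]
  exact h.2.2.1 _

theorem append_singleton_s3 (h : IsPartialLuk w m i) (ha : -1 ≤ a) (hj : (i : ℤ) + a = j) :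
    IsPartialLuk (w ++ [a]) (m + 1) j := by
  obtain ⟨hlen, hstep, hprefix, hsum⟩ := h
  refine ⟨by simp [hlen], ?_, fun t => ?_, by simp [hsum, hj]⟩
  · simpa [or_imp, forall_and] using ⟨hstep, ha⟩
  · rcases le_or_gt t w.length with ht | ht
    · rw [List.take_append_of_le_length ht]
      exact hprefix t
    · rw [List.take_of_length_le (by rw [List.length_append, List.length_singleton]; omega),
        List.sum_append, hsum, List.sum_singleton, hj]
      positivity

end IsPartialLuk

theorem LastStepDown.getLast_eq {w : List ℤ} (h : LastStepDown w) (hw : w ≠ []) :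
    w.getLast hw = -1 :=
  Option.some.inj ((List.getLast?_eq_some_getLast hw).symm.trans h)

abbrev PartialLukPath (n k : ℕ) : Type := {w : List ℤ // IsPartialLuk w n k}

namespace PartialLukPath

def dropLastEquiv (m j : ℕ) :
    PartialLukPath (m + 1) j ≃ {p : Fin (j + 2) × List ℤ // IsPartialLuk p.2 m p.1} where
  toFun w :=
    ⟨(⟨w.1.dropLast.sum.toNat, by
        have := w.2.dropLast_sum_add_getLast
        have := w.2.neg_one_le_getLast
        omega⟩, w.1.dropLast), w.2.dropLast⟩
  invFun p := ⟨p.1.2 ++ [(j : ℤ) - p.1.1],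
    p.2.append_singleton_s3 (by have := p.1.1.2; omega) (by ring)⟩
  left_inv := by
    rintro ⟨w, h⟩
    refine Subtype.ext ((congrArg (w.dropLast ++ [·]) ?_).trans
      (List.dropLast_append_getLast h.ne_nil))
    have := h.dropLast_sum_add_getLast
    have := h.dropLast_sum_nonneg
    show (j : ℤ) - (w.dropLast.sum.toNat : ℕ) = w.getLast h.ne_nil
    omega
  right_inv := by
    rintro ⟨⟨i, w⟩, h⟩
    ext
    · simp [h.2.2.2]
    · simp

instance finite : ∀ m j, Finite (PartialLukPath m j)
  | 0, j =>
    have : Subsingleton (PartialLukPath 0 j) := ⟨fun ⟨_, hu⟩ ⟨_, hv⟩ => Subtype.ext <|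
      (List.length_eq_zero_iff.1 hu.1).trans (List.length_eq_zero_iff.1 hv.1).symm⟩
    Finite.of_subsingleton
  | m + 1, j =>
    have := fun i => finite m i
    Finite.of_equiv _ ((dropLastEquiv m j).trans
      (Equiv.subtypeProdEquivSigmaSubtype fun (i : Fin (j + 2)) w => IsPartialLuk w m i)).symm

theorem card_succ (m j : ℕ) :
    Nat.card (PartialLukPath (m + 1) j) =
      ∑ i ∈ Finset.range (j + 2), Nat.card (PartialLukPath m i) := by
  rw [Nat.card_congr ((dropLastEquiv m j).trans
    (Equiv.subtypeProdEquivSigmaSubtype fun (i : Fin (j + 2)) w => IsPartialLuk w m i)),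
    Nat.card_sigma, Fin.sum_univ_eq_sum_range (fun i => Nat.card (PartialLukPath m i))]

theorem card_succ_zero (m : ℕ) :
    Nat.card (PartialLukPath (m + 1) 0) =
      Nat.card (PartialLukPath m 0) + Nat.card (PartialLukPath m 1) := by
  simp [card_succ, Finset.sum_range_succ]

theorem card_succ_succ (m j : ℕ) :
    Nat.card (PartialLukPath (m + 1) (j + 1)) =
      Nat.card (PartialLukPath (m + 1) j) + Nat.card (PartialLukPath m (j + 2)) := by
  rw [card_succ, card_succ, Finset.sum_range_succ _ (j + 2)]

theorem card_one (j : ℕ) : Nat.card (PartialLukPath 1 j) = 1 := by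
  rw [Nat.card_eq_one_iff_exists]
  refine ⟨⟨[(j : ℤ)], IsPartialLuk.append_singleton_s3 (w := []) (i := 0)
    ⟨rfl, by simp, by simp, rfl⟩ (by omega) (by simp)⟩, ?_⟩
  rintro ⟨w, h⟩
  obtain ⟨a, rfl⟩ := List.length_eq_one_iff.1 h.1
  simpa using h.2.2.2

def lastStepDownEquiv (m k : ℕ) :
    {w : List ℤ // IsPartialLuk w (m + 1) k ∧ LastStepDown w} ≃ PartialLukPath m (k + 1) where
  toFun w := ⟨w.1.dropLast, by
    have := w.2.1.dropLast_sum_add_getLast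
    rw [w.2.2.getLast_eq] at this
    simpa [show w.1.dropLast.sum.toNat = k + 1 by omega] using w.2.1.dropLast⟩
  invFun w := ⟨w.1 ++ [-1], w.2.append_singleton_s3 le_rfl (by push_cast; ring),
    List.getLast?_concat⟩
  left_inv := by
    rintro ⟨w, h, hlast⟩
    refine Subtype.ext ((congrArg (w.dropLast ++ [·]) ?_).trans
      (List.dropLast_append_getLast h.ne_nil))
    exact (hlast.getLast_eq _).symm
  right_inv w := Subtype.ext List.dropLast_concat

theorem card_add_choose_eq_choose (m j : ℕ) :
    Nat.card (PartialLukPath (m + 1) j) + (2 * m + j + 1).choose (m + j + 2) =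
      (2 * m + j + 1).choose (m + j + 1) := by
  induction m generalizing j with
  | zero => simp [card_one]
  | succ m ih =>
    rw [show 2 * (m + 1) + j + 1 = 2 * m + j + 3 by ring, show m + 1 + j + 2 = m + j + 3 by ring,
      show m + 1 + j + 1 = m + j + 2 by ring]
    induction j with
    | zero =>
      have hcard : Nat.card (PartialLukPath (m + 2) 0) =
        Nat.card (PartialLukPath (m + 1) 0) + Nat.card (PartialLukPath (m + 1) 1) :=
          card_succ_zero (m + 1)
      have h0 : Nat.card (PartialLukPath (m + 1) 0) + (2 * m + 1).choose (m + 2) =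
        (2 * m + 1).choose (m + 1) := ih 0
      have h1 : Nat.card (PartialLukPath (m + 1) 1) + (2 * m + 2).choose (m + 3) =
        (2 * m + 2).choose (m + 2) := ih 1
      have p1 : (2 * m + 3).choose (m + 3) =
        (2 * m + 2).choose (m + 2) + (2 * m + 2).choose (m + 3) := Nat.choose_succ_succ' _ _
      have p2 : (2 * m + 3).choose (m + 2) =
        (2 * m + 2).choose (m + 1) + (2 * m + 2).choose (m + 2) := Nat.choose_succ_succ' _ _
      have p3 : (2 * m + 2).choose (m + 2) =
        (2 * m + 1).choose (m + 1) + (2 * m + 1).choose (m + 2) := Nat.choose_succ_succ' _ _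
      have p4 : (2 * m + 2).choose (m + 1) =
        (2 * m + 1).choose m + (2 * m + 1).choose (m + 1) := Nat.choose_succ_succ' _ _
      -- there is no height `j - 1` to recurse from; the symmetry of row `2m + 1` replaces it
      have := Nat.choose_symm_half m
      show Nat.card (PartialLukPath (m + 2) 0) + (2 * m + 3).choose (m + 3) =
        (2 * m + 3).choose (m + 2)
      omega
    | succ j ihj =>
      have hcard : Nat.card (PartialLukPath (m + 2) (j + 1)) =
        Nat.card (PartialLukPath (m + 2) j) + Nat.card (PartialLukPath (m + 1) (j + 2)) :=
          card_succ_succ (m + 1) j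
      have h2 : Nat.card (PartialLukPath (m + 1) (j + 2)) + (2 * m + j + 3).choose (m + j + 4) =
        (2 * m + j + 3).choose (m + j + 3) := ih (j + 2)
      have hj : Nat.card (PartialLukPath (m + 2) j) + (2 * m + j + 3).choose (m + j + 3) =
        (2 * m + j + 3).choose (m + j + 2) := ihj
      have p1 : (2 * m + j + 4).choose (m + j + 4) =
        (2 * m + j + 3).choose (m + j + 3) + (2 * m + j + 3).choose (m + j + 4) :=
          Nat.choose_succ_succ' _ _
      have p2 : (2 * m + j + 4).choose (m + j + 3) =
        (2 * m + j + 3).choose (m + j + 2) + (2 * m + j + 3).choose (m + j + 3) :=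
          Nat.choose_succ_succ' _ _
      show Nat.card (PartialLukPath (m + 2) (j + 1)) + (2 * m + j + 4).choose (m + j + 4) =
        (2 * m + j + 4).choose (m + j + 3)
      omega

theorem mul_card_eq_mul_choose (m j : ℕ) :
    (m + j + 2) * Nat.card (PartialLukPath (m + 1) j) = (j + 2) * (2 * m + j + 1).choose m := by
  have hsum := card_add_choose_eq_choose m j
  have hratio := Nat.choose_succ_right_eq (2 * m + j + 1) (m + j + 1)
  rw [show 2 * m + j + 1 - (m + j + 1) = m by omega] at hratio
  have hsymm : (2 * m + j + 1).choose m = (2 * m + j + 1).choose (m + j + 1) := by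
    rw [show 2 * m + j + 1 = m + (m + j + 1) by ring, Nat.choose_symm_add]
  rw [hsymm]
  nlinarith

end PartialLukPath

theorem partialLuk_lastDown_count (n k : ℕ) (hn : 2 ≤ n) :
    (n + k + 1) * Nat.card {w : List ℤ // IsPartialLuk w n k ∧ LastStepDown w} =
      (k + 3) * Nat.choose (2 * n + k - 2) (n - 2) := by
  obtain ⟨m, rfl⟩ : ∃ m, n = m + 2 := ⟨n - 2, by omega⟩
  have key := PartialLukPath.mul_card_eq_mul_choose m (k + 1)
  rw [Nat.card_congr (PartialLukPath.lastStepDownEquiv (m + 1) k),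
    show 2 * (m + 2) + k - 2 = 2 * m + (k + 1) + 1 by omega, Nat.add_sub_cancel]
  convert key using 2; ring
end

section
/- For all n ≥ 1 and k ≥ 0, the number of partial Łukasiewicz paths of length n ending at height k equals the number of (k+2)-tuples (L_1, …, L_{k+2}) of Łukasiewicz paths whose lengths sum to n−1 (this is the coefficient identity [u^k]Total(z,u) = [k=0] + z·L(z)^{k+2}, where L(z) is the Catalan generating function). -/
/-- A Łukasiewicz path: a list of integer steps, each `≥ -1`,
with all partial sums `≥ 0` and total sum `0`. -/
def IsLuk (w : List ℤ) : Prop :=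
  (∀ x ∈ w, -1 ≤ x) ∧ (∀ i, 0 ≤ (w.take i).sum) ∧ w.sum = 0

/-! Write `P n k` for the partial Łukasiewicz paths of length `n` ending at height `k` and
`T m ℓ` for the `m`-tuples of Łukasiewicz paths of total length `ℓ`. Removing the last step gives
`P (n + 1) k ≃ Σ j ≤ k + 1, P n j`, where `j` is the height before that step. A nonempty
Łukasiewicz path splits uniquely, at its first step below the height reached after its first step,
into a pair of Łukasiewicz paths (`lukJoin` is the inverse); splitting or dropping the first path
of a tuple gives `T (m + 1) (ℓ + 1) ≃ T m (ℓ + 1) ⊕ T (m + 2) ℓ`, which unrolls to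
`T m (ℓ + 1) ≃ Σ j < m, T (j + 2) ℓ`. As `P 1 k` and `T (k + 2) 0` are singletons, induction on `ℓ`
gives `P (ℓ + 1) k ≃ T (k + 2) ℓ`. -/

def StaysNonneg (c : ℤ) (w : List ℤ) : Prop :=
  ∀ i, 0 ≤ c + (w.take i).sum

theorem staysNonneg_zero {w : List ℤ} : StaysNonneg 0 w ↔ ∀ i, 0 ≤ (w.take i).sum := by
  simp [StaysNonneg]

theorem staysNonneg_nil {c : ℤ} : StaysNonneg c [] ↔ 0 ≤ c := by
  simp [StaysNonneg]

theorem staysNonneg_cons {c a : ℤ} {v : List ℤ} :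
    StaysNonneg c (a :: v) ↔ 0 ≤ c ∧ StaysNonneg (c + a) v := by
  refine ⟨fun h => ⟨by simpa using h 0, fun i => by simpa [add_assoc] using h (i + 1)⟩, ?_⟩
  rintro ⟨hc, hv⟩ (_ | i)
  · simpa using hc
  · simpa [add_assoc] using hv i

theorem staysNonneg_append {c : ℤ} {p q : List ℤ} :
    StaysNonneg c (p ++ q) ↔ StaysNonneg c p ∧ StaysNonneg (c + p.sum) q := by
  refine ⟨fun h => ⟨fun i => ?_, fun i => ?_⟩, fun ⟨hp, hq⟩ i => ?_⟩
  · rcases le_total i p.length with hi | hi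
    · simpa [List.take_append_of_le_length hi] using h i
    · simpa [List.take_of_length_le hi] using h p.length
  · simpa [List.take_append, List.take_of_length_le (Nat.le_add_right _ _), add_assoc]
      using h (p.length + i)
  · rw [List.take_append, List.sum_append, ← add_assoc]
    rcases le_total i p.length with hi | hi
    · simpa [Nat.sub_eq_zero_of_le hi] using hp i
    · simpa [List.take_of_length_le hi] using hq (i - p.length)

theorem StaysNonneg.mono {c d : ℤ} {w : List ℤ} (h : StaysNonneg c w) (hcd : c ≤ d) :
    StaysNonneg d w :=
  fun i => by linarith [h i]

theorem exists_eq_append_neg_one_of_sum_lt {c : ℤ} (hc : 0 ≤ c) {r : List ℤ}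
    (hr : ∀ x ∈ r, -1 ≤ x) (hs : c + r.sum < 0) :
    ∃ p q, r = p ++ (-1) :: q ∧ StaysNonneg c p ∧ c + p.sum = 0 := by
  induction r generalizing c with
  | nil => simp only [List.sum_nil] at hs; omega
  | cons x r ih =>
    simp only [List.mem_cons, forall_eq_or_imp] at hr
    simp only [List.sum_cons] at hs
    rcases lt_or_ge (c + x) 0 with hcx | hcx
    · refine ⟨[], r, by rw [List.nil_append, show x = -1 by omega], staysNonneg_nil.2 hc, ?_⟩
      simp only [List.sum_nil]; omega
    · obtain ⟨p, q, rfl, hp, hsum⟩ := ih hcx hr.2 (by omega)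
      exact ⟨x :: p, q, rfl, staysNonneg_cons.2 ⟨hc, hp⟩, by rw [List.sum_cons]; omega⟩

theorem isLuk_iff_staysNonneg {w : List ℤ} :
    IsLuk w ↔ (∀ x ∈ w, -1 ≤ x) ∧ StaysNonneg 0 w ∧ w.sum = 0 := by
  rw [staysNonneg_zero]; rfl

theorem isLuk_nil : IsLuk [] := by
  simp [IsLuk]

theorem IsLuk.not_staysNonneg_append_neg_one {u : List ℤ} (hu : IsLuk u) (r : List ℤ) :
    ¬ StaysNonneg 0 (u ++ (-1) :: r) := fun h => by
  have := (staysNonneg_cons.1 (staysNonneg_append.1 h).2).2 0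
  simp [hu.2.2] at this

def lukJoin (u v : List ℤ) : List ℤ :=
  match v with
  | [] => 0 :: u
  | b :: v => (b + 1) :: (u ++ (-1) :: v)

theorem lukJoin_ne_nil (u v : List ℤ) : lukJoin u v ≠ [] := by
  cases v <;> simp [lukJoin]

theorem length_lukJoin (u v : List ℤ) : (lukJoin u v).length = u.length + v.length + 1 := by
  cases v <;> simp [lukJoin]

theorem isLuk_lukJoin {u v : List ℤ} (hu : IsLuk u) (hv : IsLuk v) : IsLuk (lukJoin u v) := by
  rw [isLuk_iff_staysNonneg] at hu hv ⊢
  obtain ⟨hu₁, hu₂, hu₃⟩ := hu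
  cases v with
  | nil =>
    refine ⟨by simpa [lukJoin] using hu₁, staysNonneg_cons.2 ⟨le_rfl, by simpa using hu₂⟩,
      by simpa [lukJoin] using hu₃⟩
  | cons b v =>
    obtain ⟨hv₁, hv₂, hv₃⟩ := hv
    simp only [List.mem_cons, forall_eq_or_imp] at hv₁
    obtain ⟨-, hv₂⟩ := staysNonneg_cons.1 hv₂
    have hb : 0 ≤ b := by simpa using hv₂ 0
    refine ⟨?_, ?_, ?_⟩
    · simp only [lukJoin, List.mem_cons, List.mem_append, forall_eq_or_imp]
      exact ⟨by omega, fun x hx => hx.elim (hu₁ x) (Or.elim · (by omega) (hv₁.2 x))⟩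
    · simp only [lukJoin, staysNonneg_cons, staysNonneg_append, hu₃]
      exact ⟨le_rfl, hu₂.mono (by omega), by omega, by simpa using hv₂⟩
    · simp only [lukJoin, List.sum_cons, List.sum_append, hu₃] at hv₃ ⊢; omega

theorem IsLuk.eq_of_append_neg_one_eq {u u' v v' : List ℤ} (hu : IsLuk u) (hu' : IsLuk u')
    (h : u ++ (-1) :: v = u' ++ (-1) :: v') : u = u' := by
  rcases List.append_eq_append_iff.1 h with ⟨_ | ⟨x, a⟩, rfl, ha⟩ | ⟨_ | ⟨x, c⟩, rfl, hc⟩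
  · simp
  · obtain rfl : -1 = x := (List.cons.inj ha).1
    exact absurd (isLuk_iff_staysNonneg.1 hu').2.1 (hu.not_staysNonneg_append_neg_one a)
  · simp
  · obtain rfl : -1 = x := (List.cons.inj hc).1
    exact absurd (isLuk_iff_staysNonneg.1 hu).2.1 (hu'.not_staysNonneg_append_neg_one c)

theorem lukJoin_inj {u v u' v' : List ℤ} (hu : IsLuk u) (hv : IsLuk v) (hu' : IsLuk u')
    (hv' : IsLuk v') (h : lukJoin u v = lukJoin u' v') : u = u' ∧ v = v' := by
  cases v with
  | nil =>
    cases v' with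
    | nil => simpa [lukJoin] using h
    | cons b' w' =>
      have : 0 ≤ b' := by simpa using hv'.2.1 1
      simp only [lukJoin, List.cons.injEq] at h; omega
  | cons b w =>
    cases v' with
    | nil =>
      have : 0 ≤ b := by simpa using hv.2.1 1
      simp only [lukJoin, List.cons.injEq] at h; omega
    | cons b' w' =>
      simp only [lukJoin, List.cons.injEq, add_left_inj] at h
      obtain rfl := hu.eq_of_append_neg_one_eq hu' h.2
      simpa [h.1] using h.2

theorem IsLuk.exists_lukJoin_eq {w : List ℤ} (hw : IsLuk w) (hne : w ≠ []) :
    ∃ u v, IsLuk u ∧ IsLuk v ∧ lukJoin u v = w := by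
  obtain ⟨a, r, rfl⟩ := List.exists_cons_of_ne_nil hne
  rw [isLuk_iff_staysNonneg] at hw
  obtain ⟨hw₁, hw₂, hw₃⟩ := hw
  simp only [List.mem_cons, forall_eq_or_imp] at hw₁
  simp only [staysNonneg_cons, zero_add, List.sum_cons] at hw₂ hw₃
  have ha : 0 ≤ a := by simpa using hw₂.2 0
  rcases ha.eq_or_lt with rfl | ha
  · refine ⟨r, [], ?_, isLuk_nil, rfl⟩
    rw [isLuk_iff_staysNonneg]; exact ⟨hw₁.2, hw₂.2, by simpa using hw₃⟩
  obtain ⟨p, q, rfl, hp, hp₀⟩ := exists_eq_append_neg_one_of_sum_lt le_rfl hw₁.2 (by omega)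
  simp only [List.mem_append, List.mem_cons] at hw₁
  refine ⟨p, (a - 1) :: q, ?_, ?_, by simp [lukJoin]⟩
  · rw [isLuk_iff_staysNonneg]
    exact ⟨fun x hx => hw₁.2 x (Or.inl hx), hp, by simpa using hp₀⟩
  · rw [isLuk_iff_staysNonneg]
    simp only [staysNonneg_append, staysNonneg_cons] at hw₂
    refine ⟨?_, staysNonneg_cons.2 ⟨le_rfl, hw₂.2.2.2.mono (by omega)⟩, ?_⟩
    · simp only [List.mem_cons, forall_eq_or_imp]
      exact ⟨by omega, fun x hx => hw₁.2 x (Or.inr (Or.inr hx))⟩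
    · simp only [List.sum_append, List.sum_cons] at hw₃ ⊢; omega

theorem isPartialLuk_append_singleton {v : List ℤ} {n k j : ℕ} :
    IsPartialLuk (v ++ [(k : ℤ) - j]) (n + 1) k ↔ IsPartialLuk v n j ∧ j ≤ k + 1 := by
  simp only [IsPartialLuk, ← staysNonneg_zero, staysNonneg_append, staysNonneg_cons,
    staysNonneg_nil, List.length_append, List.length_singleton, List.mem_append,
    List.mem_singleton, List.sum_append, List.sum_singleton, zero_add]
  constructor
  · rintro ⟨hlen, hmem, ⟨hv, -⟩, htot⟩
    have := hmem _ (.inr rfl)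
    exact ⟨⟨by omega, fun x hx => hmem x (.inl hx), hv, by omega⟩, by omega⟩
  · rintro ⟨⟨hlen, hmem, hv, hsum⟩, hj⟩
    refine ⟨by omega, fun x hx => hx.elim (hmem x) (fun h => by omega), ⟨hv, ?_, ?_⟩, by omega⟩ <;>
      omega

noncomputable def partialLukPathSuccEquiv (n k : ℕ) :
    (Σ j : Fin (k + 2), PartialLukPath n j) ≃ PartialLukPath (n + 1) k := by
  refine Equiv.ofBijective
    (fun p => ⟨p.2.1 ++ [(k : ℤ) - p.1], isPartialLuk_append_singleton.2 ⟨p.2.2, by omega⟩⟩)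
    ⟨?_, ?_⟩
  · rintro ⟨j, v, hv⟩ ⟨j', v', hv'⟩ h
    obtain ⟨rfl, h⟩ := List.append_inj' (Subtype.mk.inj h) rfl
    obtain rfl : j = j' := Fin.ext (by simpa using h)
    rfl
  · rintro ⟨w, hw⟩
    obtain ⟨v, x, rfl⟩ : ∃ v x, w = v ++ [x] := by
      rcases List.eq_nil_or_concat w with rfl | h
      · simp [IsPartialLuk] at hw
      · simpa using h
    have hx : x ≤ k := by
      have h₁ : 0 ≤ v.sum := by simpa using hw.2.2.1 v.length
      have h₂ : v.sum + x = k := by simpa using hw.2.2.2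
      omega
    obtain ⟨j, rfl⟩ : ∃ j : ℕ, x = k - j := ⟨(k - x).toNat, by omega⟩
    obtain ⟨hv, hj⟩ := isPartialLuk_append_singleton.1 hw
    exact ⟨⟨⟨j, by omega⟩, v, hv⟩, rfl⟩

instance (k : ℕ) : Unique (PartialLukPath 1 k) where
  default := ⟨[(k : ℤ)], by simp, by simp, fun i => by cases i <;> simp, by simp⟩
  uniq := by
    rintro ⟨w, hw⟩
    obtain ⟨x, rfl⟩ := List.length_eq_one_iff.1 hw.1
    obtain rfl : x = k := by simpa using hw.2.2.2
    rfl

abbrev LukTuple (m ℓ : ℕ) : Type :=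
  {L : Fin m → List ℤ // (∀ i, IsLuk (L i)) ∧ ∑ i, (L i).length = ℓ}

instance (m : ℕ) : Unique (LukTuple m 0) where
  default := ⟨fun _ => [], fun _ => isLuk_nil, by simp⟩
  uniq L := Subtype.ext <| funext fun i =>
    List.eq_nil_of_length_eq_zero (Finset.sum_eq_zero_iff.1 L.2.2 i (Finset.mem_univ _))

instance (ℓ : ℕ) : IsEmpty (LukTuple 0 (ℓ + 1)) :=
  ⟨fun L => by simpa using L.2.2⟩

def lukTupleCons (m ℓ : ℕ) : LukTuple m (ℓ + 1) ⊕ LukTuple (m + 2) ℓ → LukTuple (m + 1) (ℓ + 1)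
  | .inl L => ⟨Fin.cons [] L.1,
      Fin.forall_fin_succ.2 ⟨by simpa using isLuk_nil, by simpa using L.2.1⟩,
      by simpa [Fin.sum_univ_succ] using L.2.2⟩
  | .inr L => ⟨Fin.cons (lukJoin (L.1 0) (L.1 1)) fun i => L.1 i.succ.succ,
      Fin.forall_fin_succ.2 ⟨by simpa using isLuk_lukJoin (L.2.1 0) (L.2.1 1),
        fun i => by simpa using L.2.1 _⟩,
      by
        have := L.2.2
        simp only [Fin.sum_univ_succ, Fin.succ_zero_eq_one] at this
        simp only [Fin.sum_univ_succ, Fin.cons_zero, Fin.cons_succ, length_lukJoin]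
        omega⟩

theorem lukTupleCons_bijective (m ℓ : ℕ) : Function.Bijective (lukTupleCons m ℓ) := by
  constructor
  · rintro (L | L) (L' | L') h <;> simp only [lukTupleCons, Subtype.mk.injEq, Fin.cons_inj] at h
    · exact congrArg Sum.inl (Subtype.ext h.2)
    · exact absurd h.1.symm (lukJoin_ne_nil _ _)
    · exact absurd h.1 (lukJoin_ne_nil _ _)
    · obtain ⟨h₀, h₁⟩ := lukJoin_inj (L.2.1 0) (L.2.1 1) (L'.2.1 0) (L'.2.1 1) h.1
      refine congrArg Sum.inr (Subtype.ext (funext fun i => ?_))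
      cases i using Fin.cases with
      | zero => exact h₀
      | succ i =>
        cases i using Fin.cases with
        | zero => exact h₁
        | succ i => exact congrFun h.2 i
  · rintro ⟨L, hL, hsum⟩
    simp only [Fin.sum_univ_succ] at hsum
    by_cases h0 : L 0 = []
    · refine ⟨.inl ⟨Fin.tail L, fun i => hL _, by simpa [h0, Fin.tail] using hsum⟩, ?_⟩
      simp [lukTupleCons, ← h0]
    · obtain ⟨u, v, hu, hv, huv⟩ := (hL 0).exists_lukJoin_eq h0
      refine ⟨.inr ⟨Fin.cons u (Fin.cons v (Fin.tail L)),
        Fin.forall_fin_succ.2 ⟨by simpa using hu, Fin.forall_fin_succ.2 ⟨by simpa using hv,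
          fun i => by simpa [Fin.tail] using hL i.succ⟩⟩, ?_⟩, ?_⟩
      · rw [← huv, length_lukJoin] at hsum
        simp only [Fin.sum_univ_succ, Fin.cons_zero, Fin.cons_succ, Fin.tail]
        omega
      · simp [lukTupleCons, huv]

def sigmaFinSuccLastEquiv {m : ℕ} (β : Fin (m + 1) → Type*) :
    (Σ j, β j) ≃ (Σ j : Fin m, β j.castSucc) ⊕ β (Fin.last m) where
  toFun x := Fin.lastCases (motive := fun j => β j → _) Sum.inr (fun i b => Sum.inl ⟨i, b⟩) x.1 x.2
  invFun := Sum.elim (fun x => ⟨x.1.castSucc, x.2⟩) (fun b => ⟨Fin.last m, b⟩)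
  left_inv := by
    rintro ⟨j, b⟩
    cases j using Fin.lastCases <;> simp
  right_inv := by
    rintro (⟨j, b⟩ | b) <;> simp

noncomputable def lukTupleSuccEquiv :
    (m ℓ : ℕ) → LukTuple m (ℓ + 1) ≃ Σ j : Fin m, LukTuple (j + 2) ℓ
  | 0, _ => Equiv.equivOfIsEmpty _ _
  | m + 1, ℓ => (Equiv.ofBijective _ (lukTupleCons_bijective m ℓ)).symm.trans <|
      (Equiv.sumCongr (lukTupleSuccEquiv m ℓ) (Equiv.refl _)).trans
        (sigmaFinSuccLastEquiv fun j => LukTuple (j + 2) ℓ).symm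

noncomputable def partialLukPathEquivLukTuple :
    (ℓ k : ℕ) → PartialLukPath (ℓ + 1) k ≃ LukTuple (k + 2) ℓ
  | 0, _ => Equiv.ofUnique _ _
  | ℓ + 1, k => (partialLukPathSuccEquiv (ℓ + 1) k).symm.trans <|
      (Equiv.sigmaCongrRight fun j : Fin (k + 2) => partialLukPathEquivLukTuple ℓ j).trans
        (lukTupleSuccEquiv (k + 2) ℓ).symm

theorem partialLuk_count_eq_tuples (n k : ℕ) (hn : 1 ≤ n) :
    Nat.card {w : List ℤ // IsPartialLuk w n k} =
      Nat.card {L : Fin (k + 2) → List ℤ //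
        (∀ i, IsLuk (L i)) ∧ (∑ i, (L i).length) = n - 1} := by
  obtain ⟨ℓ, rfl⟩ : ∃ ℓ, n = ℓ + 1 := ⟨n - 1, by omega⟩
  exact Nat.card_congr (partialLukPathEquivLukTuple ℓ k)
end

section
/- For all n ≥ 1 and 0 ≤ k ≤ n, the number A(n,k) of right-to-left partial Łukasiewicz paths of length n ending at height k satisfies (n+1) · A(n,k) = (k+1) · C(2n−k, n). -/
/-!
Removing the last step of a path of length `n + 1` ending at height `k` leaves a path of length
`n` ending at some height `j` with `k - 1 ≤ j ≤ n`, so `A(n+1,k) = ∑_{j=k-1}^{n} A(n,j)`. By the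
hockey-stick identity the ballot numbers `C(2n-k,n) - C(2n-k,n+1)` obey the same recursion, hence
equal `A(n,k)`, and `C(2n-k,n+1) (n+1) = C(2n-k,n) (n-k)` turns this into the closed form.
-/

/-- A right-to-left partial Łukasiewicz path of length `n` ending at height `k`:
a list of `n` integer steps, each `≤ 1`, with all partial sums `≥ 0`
and total sum `k`. -/
def IsRLPartialLuk (w : List ℤ) (n k : ℕ) : Prop :=
  w.length = n ∧ (∀ x ∈ w, x ≤ 1) ∧ (∀ i, 0 ≤ (w.take i).sum) ∧ w.sum = k

open Finset

theorem List.forall_sum_take_nonneg_append_singleton {M : Type*}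
    [AddCommMonoid M] [PartialOrder M] [IsOrderedAddMonoid M] {v : List M} {x : M} :
    (∀ i, 0 ≤ ((v ++ [x]).take i).sum) ↔ (∀ i, 0 ≤ (v.take i).sum) ∧ 0 ≤ v.sum + x := by
  constructor
  · intro h
    refine ⟨fun i => ?_, by simpa using h (v.length + 1)⟩
    rcases le_or_gt i v.length with hi | hi
    · simpa [List.take_append_of_le_length hi] using h i
    · simpa [List.take_of_length_le hi.le] using h v.length
  · rintro ⟨hv, hx⟩ i
    rcases le_or_gt i v.length with hi | hi
    · simpa [List.take_append_of_le_length hi] using hv i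
    · rw [List.take_of_length_le (by simpa using hi)]
      simpa using hx

theorem IsRLPartialLuk.le {w : List ℤ} {n k : ℕ} (hw : IsRLPartialLuk w n k) : k ≤ n := by
  obtain ⟨hlen, hstep, -, hsum⟩ := hw
  have := w.sum_le_card_nsmul 1 hstep
  simp only [hsum, hlen, nsmul_eq_mul, mul_one] at this
  exact_mod_cast this

theorem isRLPartialLuk_zero {w : List ℤ} {k : ℕ} : IsRLPartialLuk w 0 k ↔ w = [] ∧ k = 0 := by
  constructor
  · rintro ⟨hlen, -, -, hsum⟩
    obtain rfl := List.length_eq_zero_iff.mp hlen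
    exact ⟨rfl, by simpa [eq_comm] using hsum⟩
  · rintro ⟨rfl, rfl⟩
    simp [IsRLPartialLuk]

theorem isRLPartialLuk_append_singleton {v : List ℤ} {x : ℤ} {n k : ℕ} :
    IsRLPartialLuk (v ++ [x]) (n + 1) k ↔
      ∃ j : ℕ, IsRLPartialLuk v n j ∧ k ≤ j + 1 ∧ x = k - j := by
  simp only [IsRLPartialLuk, List.forall_sum_take_nonneg_append_singleton, List.length_append,
    List.length_singleton, add_left_inj, List.mem_append, List.mem_singleton, List.sum_append,
    List.sum_singleton]
  constructor
  · rintro ⟨hlen, hstep, ⟨hprefix, -⟩, hsum⟩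
    have hv : 0 ≤ v.sum := by simpa using hprefix v.length
    have hx := hstep x (Or.inr rfl)
    refine ⟨v.sum.toNat, ⟨hlen, fun y hy => hstep y (Or.inl hy), hprefix,
      (Int.toNat_of_nonneg hv).symm⟩, ?_, ?_⟩ <;> omega
  · rintro ⟨j, ⟨hlen, hstep, hprefix, hsum⟩, hkj, rfl⟩
    refine ⟨hlen, ?_, ⟨hprefix, by omega⟩, by omega⟩
    rintro y (hy | rfl)
    exacts [hstep y hy, by omega]

def rlPartialLukFinset : ℕ → ℕ → Finset (List ℤ)
  | 0, k => if k = 0 then {[]} else ∅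
  | n + 1, k => (Icc (k - 1) n).biUnion fun j =>
      (rlPartialLukFinset n j).image (· ++ [(k : ℤ) - j])

theorem mem_rlPartialLukFinset {n k : ℕ} {w : List ℤ} :
    w ∈ rlPartialLukFinset n k ↔ IsRLPartialLuk w n k := by
  induction n generalizing k w with
  | zero =>
    rw [isRLPartialLuk_zero, rlPartialLukFinset]
    split_ifs <;> simp [*]
  | succ n ih =>
    rcases w.eq_nil_or_concat' with rfl | ⟨v, x, rfl⟩
    · simp [rlPartialLukFinset, IsRLPartialLuk]
    · simp only [rlPartialLukFinset, mem_biUnion, mem_Icc, mem_image, List.append_singleton_inj,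
        ih, isRLPartialLuk_append_singleton]
      refine exists_congr fun j => ⟨?_, ?_⟩
      · rintro ⟨⟨hkj, -⟩, _, hv, rfl, rfl⟩
        exact ⟨hv, by omega, rfl⟩
      · rintro ⟨hv, hkj, rfl⟩
        exact ⟨⟨by omega, hv.le⟩, v, hv, rfl, rfl⟩

theorem card_rlPartialLukFinset_succ (n k : ℕ) :
    #(rlPartialLukFinset (n + 1) k) = ∑ j ∈ Icc (k - 1) n, #(rlPartialLukFinset n j) := by
  rw [rlPartialLukFinset, card_biUnion]
  · exact sum_congr rfl fun j _ => card_image_of_injective _ (List.append_left_injective _)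
  · intro i _ j _ hij
    simp only [Function.onFun, disjoint_left, mem_image, not_exists, not_and]
    rintro _ ⟨u, -, rfl⟩ v - h
    have := (List.append_singleton_inj.mp h).2
    omega

theorem Finset.sum_Icc_reflect {M : Type*} [AddCommMonoid M] (f : ℕ → M) {a b c : ℕ}
    (hac : a ≤ c) (hbc : b ≤ c) : ∑ j ∈ Icc a b, f (c - j) = ∑ i ∈ Icc (c - b) (c - a), f i := by
  refine sum_nbij' (c - ·) (c - ·) ?_ ?_ ?_ ?_ (fun _ _ => rfl) <;> intro i hi <;>
    simp only [mem_Icc] at hi ⊢ <;> omega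

theorem Nat.sum_Icc_choose_of_le {l m : ℕ} (N : ℕ) (hlm : l ≤ m) :
    ∑ i ∈ Icc l N, i.choose m = (N + 1).choose (m + 1) := by
  rw [← sum_Icc_choose]
  refine (sum_subset (Icc_subset_Icc_left hlm) fun i hi him => ?_).symm
  simp only [mem_Icc, not_and, not_le] at hi him
  exact choose_eq_zero_of_lt (by omega)

theorem Nat.sum_Icc_choose_two_mul_sub {a n m : ℕ} (ha : a ≤ 2 * n) (hm : n ≤ m) :
    ∑ j ∈ Icc a n, (2 * n - j).choose m = (2 * n - a + 1).choose (m + 1) := by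
  rw [sum_Icc_reflect (·.choose m) ha (by omega)]
  exact sum_Icc_choose_of_le _ (by omega)

theorem card_rlPartialLukFinset_add_choose {n k : ℕ} (hk : k ≤ n) :
    #(rlPartialLukFinset n k) + (2 * n - k).choose (n + 1) = (2 * n - k).choose n := by
  induction n generalizing k with
  | zero => simp [Nat.le_zero.mp hk, rlPartialLukFinset]
  | succ n ih =>
    have hstep : #(rlPartialLukFinset (n + 1) k) + (2 * n - (k - 1) + 1).choose (n + 2) =
        (2 * n - (k - 1) + 1).choose (n + 1) := by
      rw [card_rlPartialLukFinset_succ, ← Nat.sum_Icc_choose_two_mul_sub (by omega) le_rfl,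
        ← Nat.sum_Icc_choose_two_mul_sub (by omega) (by omega), ← sum_add_distrib]
      exact sum_congr rfl fun j hj => ih (mem_Icc.mp hj).2
    rcases Nat.eq_zero_or_pos k with rfl | hk0
    -- `0 - 1 = 0` in `ℕ`, so `hstep` is the `k = 1` recursion; symmetry of `C(2n+1, ·)` bridges it.
    · have hsymm : (2 * n + 1).choose n = (2 * n + 1).choose (n + 1) := by
        rw [← Nat.choose_symm (by omega : n + 1 ≤ 2 * n + 1)]
        congr 1
        omega
      simp only [Nat.zero_sub, Nat.sub_zero] at hstep ⊢
      have hpascal₁ : (2 * n + 2).choose (n + 2) =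
          (2 * n + 1).choose (n + 1) + (2 * n + 1).choose (n + 2) := Nat.choose_succ_succ _ _
      have hpascal₂ : (2 * n + 2).choose (n + 1) =
          (2 * n + 1).choose n + (2 * n + 1).choose (n + 1) := Nat.choose_succ_succ _ _
      rw [show 2 * (n + 1) = 2 * n + 2 by ring, hpascal₁, hpascal₂]
      omega
    · rwa [show 2 * n - (k - 1) + 1 = 2 * (n + 1) - k by omega] at hstep

theorem rlPartialLuk_count_general (n k : ℕ) (hk : k ≤ n) :
    (n + 1) * Nat.card {w : List ℤ // IsRLPartialLuk w n k} =
      (k + 1) * Nat.choose (2 * n - k) n := by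
  have hcard : Nat.card {w : List ℤ // IsRLPartialLuk w n k} = #(rlPartialLukFinset n k) := by
    rw [← Nat.card_eq_finsetCard]
    exact Nat.card_congr (Equiv.subtypeEquivRight fun _ => mem_rlPartialLukFinset.symm)
  have hballot := card_rlPartialLukFinset_add_choose hk
  have hratio := Nat.choose_succ_right_eq (2 * n - k) n
  rw [show 2 * n - k - n = n - k by omega] at hratio
  rw [hcard]
  zify [hk] at hballot hratio ⊢
  linear_combination (↑n + 1) * hballot - hratio

theorem rlPartialLuk_count (n k : ℕ) (hn : 1 ≤ n) (hk : k ≤ n) :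
    (n + 1) * Nat.card {w : List ℤ // IsRLPartialLuk w n k} =
      (k + 1) * Nat.choose (2 * n - k) n :=
  rlPartialLuk_count_general n k hk
end

section
/- For all 0 ≤ k ≤ n, the number of right-to-left partial Łukasiewicz paths of length n ending at height k equals the number of (k+1)-tuples (L_1, …, L_{k+1}) of Łukasiewicz paths whose lengths sum to n−k (this is the coefficient identity [u^k]Total(z,u) = z^k·L(z)^{k+1}, where L(z) is the Catalan generating function). -/
/-! A right-to-left partial path of height `k` splits uniquely as
`P₀ ++ 1 :: P₁ ++ 1 :: ⋯ ++ 1 :: Pₖ` by cutting it at the last zero of its prefix sums and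
recursing on the rest. Each piece `Pᵢ` is a closed path (steps `≤ 1`, prefix sums `≥ 0`,
sum `0`), and reading a closed path backwards with negated steps turns it into a Łukasiewicz
path of the same length. The lengths satisfy `n = ∑ |Pᵢ| + k`. -/

namespace Lukasiewicz

def IsRLPartial (w : List ℤ) : Prop :=
  (∀ x ∈ w, x ≤ 1) ∧ ∀ i, 0 ≤ (w.take i).sum

abbrev RLPartial (k : ℕ) : Type := {w : List ℤ // IsRLPartial w ∧ w.sum = k}

abbrev LukPath : Type := {l : List ℤ // IsLuk l}

def negRev (l : List ℤ) : List ℤ := (l.map Neg.neg).reverse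

@[simp] lemma negRev_negRev (l : List ℤ) : negRev (negRev l) = l := by simp [negRev]

@[simp] lemma length_negRev (l : List ℤ) : (negRev l).length = l.length := by simp [negRev]

@[simp] lemma sum_negRev (l : List ℤ) : (negRev l).sum = -l.sum := by
  simp [negRev, List.sum_neg]

lemma sum_take_negRev (l : List ℤ) (i : ℕ) :
    ((negRev l).take i).sum = (l.take (l.length - i)).sum - l.sum := by
  have := List.sum_take_add_sum_drop l (l.length - i)
  simp only [negRev, List.take_reverse, List.sum_reverse, List.length_map, ← List.map_drop,
    ← List.sum_neg]
  linarith

lemma isLuk_negRev_iff {w : List ℤ} : IsLuk (negRev w) ↔ IsRLPartial w ∧ w.sum = 0 := by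
  have hsteps : (∀ x ∈ negRev w, -1 ≤ x) ↔ ∀ x ∈ w, x ≤ 1 := by
    simp only [negRev, List.mem_reverse, List.forall_mem_map, neg_le_neg_iff]
  suffices w.sum = 0 → ((∀ i, 0 ≤ ((negRev w).take i).sum) ↔ ∀ i, 0 ≤ (w.take i).sum) by
    simp only [IsLuk, IsRLPartial, hsteps, sum_negRev, neg_eq_zero]
    tauto
  intro h0
  simp only [sum_take_negRev, h0, sub_zero]
  refine ⟨fun h j => ?_, fun h i => h _⟩
  rcases le_or_gt j w.length with hj | hj
  · simpa [Nat.sub_sub_self hj] using h (w.length - j)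
  · rw [List.take_of_length_le hj.le, h0]

def lukEquivRLPartialZero : LukPath ≃ RLPartial 0 where
  toFun l := ⟨negRev l, by simpa using (isLuk_negRev_iff (w := negRev l)).1 (by simpa using l.2)⟩
  invFun w := ⟨negRev w, isLuk_negRev_iff.2 (by simpa using w.2)⟩
  left_inv l := Subtype.ext (negRev_negRev l)
  right_inv w := Subtype.ext (negRev_negRev w)

@[simp] lemma length_lukEquivRLPartialZero (l : LukPath) :
    (lukEquivRLPartialZero l).1.length = l.1.length :=
  length_negRev l

lemma sum_take_append_cons (P Q : List ℤ) (a : ℤ) (j : ℕ) :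
    ((P ++ a :: Q).take (P.length + 1 + j)).sum = P.sum + a + (Q.take j).sum := by
  rw [List.take_append, List.take_of_length_le (by omega), Nat.add_assoc, Nat.add_sub_cancel_left,
    Nat.add_comm, List.take_succ_cons, List.sum_append, List.sum_cons, add_assoc]

lemma isRLPartial_append_cons_one {P Q : List ℤ} (hP : IsRLPartial P) (hP0 : P.sum = 0)
    (hQ : IsRLPartial Q) : IsRLPartial (P ++ 1 :: Q) := by
  refine ⟨?_, fun i => ?_⟩
  · simp only [List.mem_append, List.mem_cons]
    rintro x (hx | rfl | hx)
    exacts [hP.1 x hx, le_rfl, hQ.1 x hx]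
  rcases le_or_gt i P.length with hi | hi
  · rw [List.take_append_of_le_length hi]
    exact hP.2 i
  · obtain ⟨j, rfl⟩ : ∃ j, i = P.length + 1 + j := ⟨i - P.length - 1, by omega⟩
    rw [sum_take_append_cons, hP0]
    linarith [hQ.2 j]

lemma exists_eq_append_cons_one {w : List ℤ} (hw : IsRLPartial w) (hpos : 0 < w.sum) :
    ∃ P Q, w = P ++ 1 :: Q ∧ IsRLPartial P ∧ P.sum = 0 ∧ IsRLPartial Q := by
  classical
  set t := Nat.findGreatest (fun i => (w.take i).sum = 0) w.length
  have hzero : (w.take t).sum = 0 :=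
    Nat.findGreatest_spec (P := fun i => (w.take i).sum = 0) (Nat.zero_le _) (by simp)
  have hafter : ∀ i, t < i → 0 < (w.take i).sum := by
    intro i hi
    rcases le_or_gt i w.length with h | h
    · exact lt_of_le_of_ne (hw.2 i) (Ne.symm (Nat.findGreatest_is_greatest hi h))
    · rwa [List.take_of_length_le h.le]
  have ht : t < w.length := by
    refine lt_of_le_of_ne (Nat.findGreatest_le _) fun h => ?_
    rw [h, List.take_length] at hzero
    omega
  have hsplit : w = w.take t ++ w[t] :: w.drop (t + 1) := by
    rw [← List.drop_eq_getElem_cons ht, List.take_append_drop]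
  have hrest : ∀ j, 0 < w[t] + ((w.drop (t + 1)).take j).sum := by
    intro j
    have := sum_take_append_cons (w.take t) (w.drop (t + 1)) w[t] j
    rw [List.length_take_of_le ht.le, ← hsplit, hzero, zero_add] at this
    exact this ▸ hafter _ (by omega)
  have hone : w[t] = 1 := by
    have := hrest 0
    simp only [List.take_zero, List.sum_nil, add_zero] at this
    exact le_antisymm (hw.1 _ (List.getElem_mem ht)) this
  refine ⟨w.take t, w.drop (t + 1), hone ▸ hsplit, ⟨?_, fun i => ?_⟩, hzero, ⟨?_, fun j => ?_⟩⟩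
  · exact fun x hx => hw.1 x (List.mem_of_mem_take hx)
  · rw [List.take_take]
    exact hw.2 _
  · exact fun x hx => hw.1 x (List.mem_of_mem_drop hx)
  · linarith [hrest j]

lemma append_cons_one_inj {P Q P' Q' : List ℤ} (hP : P.sum = 0) (hQ : ∀ i, 0 ≤ (Q.take i).sum)
    (hP' : P'.sum = 0) (hQ' : ∀ i, 0 ≤ (Q'.take i).sum) (h : P ++ 1 :: Q = P' ++ 1 :: Q') :
    P = P' ∧ Q = Q' := by
  have length_le : ∀ {P Q P' Q' : List ℤ}, P.sum = 0 → (∀ i, 0 ≤ (Q.take i).sum) → P'.sum = 0 →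
      P ++ 1 :: Q = P' ++ 1 :: Q' → P'.length ≤ P.length := by
    intro P Q P' Q' hP hQ hP' h
    by_contra! hlt
    obtain ⟨j, hj⟩ : ∃ j, P'.length = P.length + 1 + j := ⟨P'.length - P.length - 1, by omega⟩
    have := congrArg (fun l => (l.take P'.length).sum) h
    simp only [List.take_left, hP'] at this
    rw [hj, sum_take_append_cons, hP] at this
    linarith [hQ j]
  have hlen := le_antisymm (length_le hP' hQ' hP h.symm) (length_le hP hQ hP' h)
  obtain ⟨rfl, h'⟩ := List.append_inj h hlen
  exact ⟨rfl, List.cons_injective h'⟩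

def appendConsOne (k : ℕ) (x : RLPartial 0 × RLPartial k) : RLPartial (k + 1) :=
  ⟨x.1.1 ++ 1 :: x.2.1, isRLPartial_append_cons_one x.1.2.1 (by simpa using x.1.2.2) x.2.2.1, by
    simp [x.1.2.2, x.2.2.2, add_comm]⟩

lemma appendConsOne_bijective (k : ℕ) : Function.Bijective (appendConsOne k) := by
  refine ⟨fun x y h => ?_, ?_⟩
  · obtain ⟨hP, hQ⟩ := append_cons_one_inj (by simpa using x.1.2.2) x.2.2.1.2
      (by simpa using y.1.2.2) y.2.2.1.2 (congrArg Subtype.val h)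
    exact Prod.ext (Subtype.ext hP) (Subtype.ext hQ)
  · rintro ⟨w, hw, hsum⟩
    obtain ⟨P, Q, rfl, hP, hP0, hQ⟩ := exists_eq_append_cons_one hw (by rw [hsum]; positivity)
    have hQk : Q.sum = k := by simpa [hP0, add_comm] using hsum
    exact ⟨(⟨P, hP, by simpa using hP0⟩, ⟨Q, hQ, hQk⟩), rfl⟩

noncomputable def piLukEquivRLPartial : (k : ℕ) → (Fin (k + 1) → LukPath) ≃ RLPartial k
  | 0 => (Equiv.funUnique (Fin 1) LukPath).trans lukEquivRLPartialZero
  | k + 1 => (Fin.consEquiv fun _ => LukPath).symm.trans <|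
      (lukEquivRLPartialZero.prodCongr (piLukEquivRLPartial k)).trans <|
        .ofBijective _ (appendConsOne_bijective k)

lemma length_piLukEquivRLPartial (k : ℕ) (L : Fin (k + 1) → LukPath) :
    (piLukEquivRLPartial k L).1.length = ∑ i, (L i).1.length + k := by
  induction k with
  | zero => simp [piLukEquivRLPartial]
  | succ k ih =>
    simp only [piLukEquivRLPartial, Equiv.trans_apply, Fin.consEquiv_symm_apply,
      Equiv.prodCongr_apply, Prod.map_apply, Equiv.ofBijective_apply, appendConsOne,
      List.length_append, length_lukEquivRLPartialZero, List.length_cons, ih, Fin.tail,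
      Fin.sum_univ_succ (n := k + 1)]
    omega

lemma isRLPartialLuk_iff {w : List ℤ} {n k : ℕ} :
    IsRLPartialLuk w n k ↔ (IsRLPartial w ∧ w.sum = k) ∧ w.length = n := by
  unfold IsRLPartialLuk IsRLPartial
  tauto

end Lukasiewicz

open Lukasiewicz in
theorem rlPartialLuk_count_eq_tuples (n k : ℕ) (hk : k ≤ n) :
    Nat.card {w : List ℤ // IsRLPartialLuk w n k} =
      Nat.card {L : Fin (k + 1) → List ℤ //
        (∀ i, IsLuk (L i)) ∧ (∑ i, (L i).length) = n - k} := by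
  have hlength (L : Fin (k + 1) → LukPath) :
      ∑ i, (L i).1.length = n - k ↔ (piLukEquivRLPartial k L).1.length = n := by
    rw [length_piLukEquivRLPartial]
    omega
  calc Nat.card {w : List ℤ // IsRLPartialLuk w n k}
      = Nat.card {w : RLPartial k // w.1.length = n} :=
        Nat.card_congr <| (Equiv.subtypeEquivRight fun _ => isRLPartialLuk_iff).trans
          (Equiv.subtypeSubtypeEquivSubtypeInter _ _).symm
    _ = Nat.card {L : Fin (k + 1) → LukPath // ∑ i, (L i).1.length = n - k} :=
        Nat.card_congr ((piLukEquivRLPartial k).subtypeEquiv hlength).symm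
    _ = _ := by
      refine Nat.card_congr <| .trans ?_ (Equiv.subtypeSubtypeEquivSubtypeInter
        (fun L : Fin (k + 1) → List ℤ => ∀ i, IsLuk (L i)) fun L => ∑ i, (L i).length = n - k)
      exact Equiv.subtypePiEquivPi.symm.subtypeEquiv fun _ => Iff.rfl
end

section
/- Fix t ≥ 0 and let a_n be the number of partial Łukasiewicz paths of length n (ending at any height) all of whose partial sums lie in [0, t]. Then the formal power series identity F_t(z) · (Σ_{n≥0} a_n z^n) = 1 holds in ℤ⟦z⟧, where F_t(z) = Σ_{j ≥ 0, 2j ≤ t+2} (−1)^j · C(t+2−j, j) · z^j is the Fibonacci polynomial (equivalently: a_0 = 1 and for every n ≥ 1, Σ_j (−1)^j C(t+2−j, j) a_{n−j} = 0). -/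
/-!
Let `q h` count the paths whose final height is `< h`. Deleting the last step of a path ending
at height `h ≤ t` leaves an arbitrary path ending at height `≤ h + 1`, so
`q (h + 1) = q h + [h = 0] + z * q (h + 2)` for `h ≤ t`, while `q 0 = 0` and
`q (t + 1) = q (t + 2)` is the full generating function `T`. Read downwards from `h = t + 2`
this is the recurrence `F (k + 2) = F (k + 1) - z * F k` of the Fibonacci polynomials
(`F 0 = F 1 = 1`, `F (t + 2) = fibPoly t`), so `q (t + 2 - k) = F k * T`, and the equation at
`h = 0` becomes `F (t + 2) * T = 1`.
-/

/-- A partial Łukasiewicz path of length `n` of height at most `t`: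
a list of `n` integer steps, each `≥ -1`, with all partial sums in `[0, t]`. -/
def IsBddPartialLuk (w : List ℤ) (n t : ℕ) : Prop :=
  w.length = n ∧ (∀ x ∈ w, -1 ≤ x) ∧
    (∀ i, 0 ≤ (w.take i).sum ∧ (w.take i).sum ≤ t)

/-- The Fibonacci polynomial `F_t(z) = Σ_j (-1)^j C(t+2-j, j) z^j`
(as a formal power series; `C(t+2-j, j) = 0` once `2j > t+2`). -/
noncomputable def fibPoly (t : ℕ) : PowerSeries ℤ :=
  PowerSeries.mk fun j => (-1) ^ j * (Nat.choose (t + 2 - j) j : ℤ)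

open PowerSeries Finset

theorem List.forall_take_append_singleton {α : Type*} (p : List α → Prop) (u : List α) (s : α) :
    (∀ i, p ((u ++ [s]).take i)) ↔ (∀ i, p (u.take i)) ∧ p (u ++ [s]) := by
  constructor
  · intro H
    refine ⟨fun i => ?_, by simpa [List.take_of_length_le] using H (u.length + 1)⟩
    rcases le_total i u.length with hi | hi
    · simpa [List.take_append_of_le_length hi] using H i
    · simpa [List.take_of_length_le hi] using H u.length
  · rintro ⟨Hu, Hs⟩ i
    rcases le_or_gt i u.length with hi | hi
    · simpa [List.take_append_of_le_length hi] using Hu i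
    · rwa [List.take_of_length_le (by simpa using hi)]

theorem IsBddPartialLuk.sum_mem_Icc {w : List ℤ} {n t : ℕ} (hw : IsBddPartialLuk w n t) :
    w.sum ∈ Set.Icc 0 (t : ℤ) := by
  simpa using hw.2.2 w.length

theorem isBddPartialLuk_zero {w : List ℤ} {t : ℕ} : IsBddPartialLuk w 0 t ↔ w = [] := by
  refine ⟨fun hw => List.eq_nil_of_length_eq_zero hw.1, ?_⟩
  rintro rfl
  simp [IsBddPartialLuk]

theorem isBddPartialLuk_append_singleton {u : List ℤ} {s : ℤ} {n t : ℕ} :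
    IsBddPartialLuk (u ++ [s]) (n + 1) t ↔
      IsBddPartialLuk u n t ∧ -1 ≤ s ∧ 0 ≤ u.sum + s ∧ u.sum + s ≤ t := by
  simp only [IsBddPartialLuk, List.length_append, List.length_singleton, Nat.add_right_cancel_iff,
    List.forall_mem_append, List.forall_mem_singleton,
    List.forall_take_append_singleton (fun l : List ℤ => 0 ≤ l.sum ∧ l.sum ≤ t),
    List.sum_append, List.sum_singleton]
  tauto

theorem isBddPartialLuk_succ {w : List ℤ} {n t : ℕ} :
    IsBddPartialLuk w (n + 1) t ↔ ∃ u s, w = u ++ [s] ∧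
      IsBddPartialLuk u n t ∧ -1 ≤ s ∧ 0 ≤ u.sum + s ∧ u.sum + s ≤ t := by
  constructor
  · intro hw
    rcases w.eq_nil_or_concat' with rfl | ⟨u, s, rfl⟩
    · simpa [IsBddPartialLuk] using hw.1
    · exact ⟨u, s, rfl, isBddPartialLuk_append_singleton.1 hw⟩
  · rintro ⟨u, s, rfl, hus⟩
    exact isBddPartialLuk_append_singleton.2 hus

theorem finite_setOf_isBddPartialLuk (n t : ℕ) : {w | IsBddPartialLuk w n t}.Finite := by
  induction n with
  | zero => simp [isBddPartialLuk_zero]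
  | succ n ih =>
    refine (ih.image2 (fun u s => u ++ [s]) (Set.finite_Icc (-1 : ℤ) t)).subset ?_
    intro w hw
    obtain ⟨u, s, rfl, hu, hs, -, hst⟩ := isBddPartialLuk_succ.1 hw
    exact ⟨u, hu, s, ⟨hs, by linarith [hu.sum_mem_Icc.1]⟩, rfl⟩

noncomputable def bddPaths (n t : ℕ) : Finset (List ℤ) :=
  (finite_setOf_isBddPartialLuk n t).toFinset

@[simp]
theorem mem_bddPaths {w : List ℤ} {n t : ℕ} : w ∈ bddPaths n t ↔ IsBddPartialLuk w n t :=
  Set.Finite.mem_toFinset _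

theorem bddPaths_zero (t : ℕ) : bddPaths 0 t = {[]} := by
  ext w
  simp [isBddPartialLuk_zero]

theorem natCard_isBddPartialLuk (n t : ℕ) :
    Nat.card {w : List ℤ // IsBddPartialLuk w n t} = #(bddPaths n t) :=
  Nat.card_eq_card_finite_toFinset _

theorem card_filter_sum_eq_bddPaths_succ {n t h : ℕ} (ht : h ≤ t) :
    #{w ∈ bddPaths (n + 1) t | w.sum = (h : ℤ)} = #{u ∈ bddPaths n t | u.sum < (h : ℤ) + 2} := by
  refine card_nbij' List.dropLast (fun u => u ++ [(h : ℤ) - u.sum]) ?_ ?_ ?_ ?_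
  · intro w hw
    simp only [mem_coe, mem_filter, mem_bddPaths, isBddPartialLuk_succ] at hw ⊢
    obtain ⟨⟨u, s, rfl, hu, hs, -⟩, hsum⟩ := hw
    simp only [List.sum_append, List.sum_singleton] at hsum
    simp only [List.dropLast_concat]
    exact ⟨hu, by omega⟩
  · intro u hu
    simp only [mem_coe, mem_filter, mem_bddPaths, isBddPartialLuk_succ] at hu ⊢
    obtain ⟨hu₀, -⟩ := hu.1.sum_mem_Icc
    exact ⟨⟨u, _, rfl, hu.1, by omega, by omega, by omega⟩, by simp⟩
  · intro w hw
    simp only [mem_coe, mem_filter, mem_bddPaths, isBddPartialLuk_succ] at hw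
    obtain ⟨⟨u, s, rfl, -⟩, hsum⟩ := hw
    simp only [List.sum_append, List.sum_singleton] at hsum
    simp only [List.dropLast_concat]
    congr 2
    omega
  · intro u _
    simp

theorem Finset.card_filter_lt_add_one {α : Type*} (s : Finset α) (f : α → ℤ) (h : ℤ) :
    #{a ∈ s | f a < h + 1} = #{a ∈ s | f a < h} + #{a ∈ s | f a = h} := by
  classical
  rw [← card_union_of_disjoint (disjoint_filter.2 fun a _ h₁ h₂ => by omega), ← filter_or]
  congr 1
  exact filter_congr fun a _ => by omega

noncomputable def heightBelowSeries (t h : ℕ) : PowerSeries ℤ :=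
  mk fun n => #{w ∈ bddPaths n t | w.sum < (h : ℤ)}

theorem heightBelowSeries_zero (t : ℕ) : heightBelowSeries t 0 = 0 := by
  ext n
  simp only [heightBelowSeries, coeff_mk, map_zero, Nat.cast_eq_zero, card_eq_zero,
    filter_eq_empty_iff, mem_bddPaths, Nat.cast_zero, not_lt]
  exact fun w hw => hw.sum_mem_Icc.1

theorem heightBelowSeries_of_lt {t h : ℕ} (ht : t < h) :
    heightBelowSeries t h = mk fun n => (Nat.card {w : List ℤ // IsBddPartialLuk w n t} : ℤ) := by
  ext n
  rw [heightBelowSeries, coeff_mk, coeff_mk, natCard_isBddPartialLuk, filter_true_of_mem]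
  intro w hw
  have := (mem_bddPaths.1 hw).sum_mem_Icc.2
  omega

theorem heightBelowSeries_succ {t h : ℕ} (ht : h ≤ t) :
    heightBelowSeries t (h + 1) =
      heightBelowSeries t h + (if h = 0 then 1 else 0) + X * heightBelowSeries t (h + 2) := by
  ext n
  simp only [heightBelowSeries, map_add, coeff_mk, Nat.cast_succ, card_filter_lt_add_one,
    Nat.cast_add, add_assoc, add_right_inj]
  rcases n with _ | n
  · rcases h with _ | h <;> simp [bddPaths_zero, filter_singleton, eq_comm (a := (0 : ℤ))]
    omega
  · simp [card_filter_sum_eq_bddPaths_succ ht, apply_ite (coeff (n + 1)), coeff_succ_X_mul]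

section FibSeq

variable {R : Type*} [CommRing R]

def fibSeq (x : R) : ℕ → R
  | 0 => 1
  | 1 => 1
  | k + 2 => fibSeq x (k + 1) - x * fibSeq x k

theorem eq_fibSeq_mul_of_rec {x : R} {r : ℕ → R} {N : ℕ} (h₁ : r 1 = r 0)
    (hrec : ∀ k, k + 2 ≤ N → r (k + 2) = r (k + 1) - x * r k) :
    ∀ k ≤ N, r k = fibSeq x k * r 0 := by
  intro k
  induction k using Nat.strong_induction_on with
  | _ k ih =>
    rcases k with _ | _ | k
    · simp [fibSeq]
    · simp [fibSeq, h₁]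
    · intro hk
      rw [hrec k hk, ih (k + 1) (by omega) (by omega), ih k (by omega) (by omega), fibSeq]
      ring

theorem fibSeq_mul_eq_one_of_rec {x : R} {q : ℕ → R} {t : ℕ} (h₀ : q 0 = 0)
    (htop : q (t + 2) = q (t + 1))
    (hrec : ∀ h ≤ t, q (h + 1) = q h + (if h = 0 then 1 else 0) + x * q (h + 2)) :
    fibSeq x (t + 2) * q (t + 1) = 1 := by
  have hdown : ∀ k, k + 2 ≤ t + 1 →
      q (t + 2 - (k + 2)) = q (t + 2 - (k + 1)) - x * q (t + 2 - k) := by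
    intro k hk
    have := hrec (t - k) (by omega)
    rw [if_neg (by omega), show t - k + 1 = t + 2 - (k + 1) by omega,
      show t - k + 2 = t + 2 - k by omega] at this
    rw [show t + 2 - (k + 2) = t - k by omega]
    linear_combination -this
  have hdesc := eq_fibSeq_mul_of_rec (r := fun k => q (t + 2 - k)) (by simpa using htop.symm) hdown
  have hq₁ : q 1 = fibSeq x (t + 1) * q (t + 1) := by
    simpa [htop] using hdesc (t + 1) le_rfl
  have hq₂ : q 2 = fibSeq x t * q (t + 1) := by
    simpa [htop] using hdesc t (by omega)
  have hbase : q 1 = 1 + x * q 2 := by simpa [h₀] using hrec 0 (Nat.zero_le _)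
  rw [fibSeq]
  linear_combination hbase - hq₁ + x * hq₂

theorem coeff_fibSeq_X (k j : ℕ) :
    coeff j (fibSeq (X : PowerSeries R) k) = (-1) ^ j * (k - j).choose j := by
  induction k using Nat.strong_induction_on generalizing j with
  | _ k ih =>
    rcases k with _ | _ | k
    · rcases j with _ | j <;> simp [fibSeq]
    · rcases j with _ | _ | j <;> simp [fibSeq, coeff_one]
    · rcases j with _ | j
      · rw [fibSeq, map_sub, coeff_zero_X_mul, ih _ (by omega)]
        simp
      · rw [fibSeq, map_sub, coeff_succ_X_mul, ih _ (by omega), ih _ (by omega)]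
        have hpascal : (k + 2 - (j + 1)).choose (j + 1) =
            (k + 1 - (j + 1)).choose (j + 1) + (k - j).choose j := by
          rcases le_or_gt j k with hj | hj
          · rw [show k + 2 - (j + 1) = k - j + 1 by omega, show k + 1 - (j + 1) = k - j by omega,
              Nat.choose_succ_succ', add_comm]
          · obtain ⟨i, rfl⟩ : ∃ i, j = i + 1 := ⟨j - 1, by omega⟩
            rw [show k + 2 - (i + 1 + 1) = 0 by omega, show k + 1 - (i + 1 + 1) = 0 by omega,
              show k - (i + 1) = 0 by omega]
            simp [Nat.choose_zero_succ]
        rw [hpascal]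
        push_cast
        ring

end FibSeq

theorem fibPoly_eq_fibSeq (t : ℕ) : fibPoly t = fibSeq X (t + 2) := by
  ext j
  rw [fibPoly, coeff_mk, coeff_fibSeq_X]

theorem bddPartialLuk_gf (t : ℕ) :
    fibPoly t *
      PowerSeries.mk
        (fun n => (Nat.card {w : List ℤ // IsBddPartialLuk w n t} : ℤ)) = 1 := by
  rw [fibPoly_eq_fibSeq, ← heightBelowSeries_of_lt (Nat.lt_succ_self t)]
  refine fibSeq_mul_eq_one_of_rec (heightBelowSeries_zero t) ?_ fun h => heightBelowSeries_succ
  rw [heightBelowSeries_of_lt (by omega), heightBelowSeries_of_lt (by omega)]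
end
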